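/- Let B be a skew left brace and A₁, A₂ trivial subbraces with B = A₁ + A₂ and B = A₁A₂. Then A₁*A₂ and A₂*A₁ are strong left ideals of B, and B*B = A₁*A₂ + A₂*A₁. -/

import Mathlib

/-- A skew left brace: a set with two group structures `(B,+)` and `(B,·)`
satisfying `a(b+c) = ab - a + ac`. -/
class SkewBrace (B : Type*) extends AddGroup B, Group B where
  mul_add_dist : ∀ a b c : B, a * (b + c) = a * b + -a + a * c

namespace SkewBrace

variable {B : Type*} [SkewBrace B]

/-- The lambda map `λ_a(b) = -a + ab`. -/
def lam (a b : B) : B := -a + a * b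

/-- The star product `a * b = -a + ab - b`. -/
def star (a b : B) : B := -a + a * b + -b

/-- A subbrace: a subgroup of `(B,+)` that is also a subgroup of `(B,·)`. -/
def IsSubbrace (S : Set B) : Prop :=
  ((0 : B) ∈ S ∧ (∀ a ∈ S, ∀ b ∈ S, a + b ∈ S) ∧ (∀ a ∈ S, -a ∈ S)) ∧
  ((1 : B) ∈ S ∧ (∀ a ∈ S, ∀ b ∈ S, a * b ∈ S) ∧ (∀ a ∈ S, a⁻¹ ∈ S))

/-- A left ideal: a subbrace with `B * S ⊆ S`. -/
def IsLeftIdeal (S : Set B) : Prop :=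
  IsSubbrace S ∧ ∀ b : B, ∀ a ∈ S, star b a ∈ S

/-- A strong left ideal: a left ideal normal in `(B,+)`. -/
def IsStrongLeftIdeal (S : Set B) : Prop :=
  IsLeftIdeal S ∧ ∀ b : B, ∀ a ∈ S, b + a + -b ∈ S

/-- An ideal: a strong left ideal which is also a right ideal. -/
def IsIdeal (S : Set B) : Prop :=
  IsStrongLeftIdeal S ∧ ∀ a ∈ S, ∀ b : B, star a b ∈ S

/-- A trivial subbrace: both operations coincide on it. -/
def IsTrivialSubbrace (S : Set B) : Prop :=
  IsSubbrace S ∧ ∀ a ∈ S, ∀ b ∈ S, a * b = a + b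

/-- An abelian subbrace: a trivial subbrace whose group is abelian. -/
def IsAbelianSubbrace (S : Set B) : Prop :=
  IsTrivialSubbrace S ∧ ∀ a ∈ S, ∀ b ∈ S, a + b = b + a

end SkewBrace

namespace SkewBrace

variable {B : Type*} [SkewBrace B]

lemma mul_zero' (a : B) : a * 0 = a := by
  have h := SkewBrace.mul_add_dist a 0 0
  rw [add_zero, add_assoc] at h
  exact (neg_add_eq_zero.mp (left_eq_add.mp h)).symm

lemma one_eq_zero : (1 : B) = 0 := by
  have := mul_zero' (1 : B)
  rw [one_mul] at this
  exact this.symm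

lemma lam_zero (a : B) : lam a 0 = 0 := by
  simp [lam, mul_zero']

lemma lam_add (a b c : B) : lam a (b + c) = lam a b + lam a c := by
  simp [lam, SkewBrace.mul_add_dist a b c, add_assoc]

lemma lam_neg (a b : B) : lam a (-b) = -lam a b := by
  have h : lam a b + lam a (-b) = 0 := by
    rw [← lam_add, add_neg_cancel, lam_zero]
  exact (neg_eq_of_add_eq_zero_right h).symm

lemma mul_eq_add_lam (a b : B) : a * b = a + lam a b := by
  simp [lam]

lemma lam_lam (x y c : B) : lam (x * y) c = lam x (lam y c) := by
  have key : lam x (lam y c) = lam x (-y) + lam x (y * c) := by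
    rw [← lam_add]; rfl
  have hneg : lam x (-y) = -(x * y) + x := by
    rw [lam_neg]; simp [lam, neg_add_rev]
  rw [key, hneg, lam, lam]
  rw [add_assoc, ← add_assoc x (-x) (x * (y * c)), add_neg_cancel, zero_add, mul_assoc]

lemma star_eq (a b : B) : star a b = lam a b + -b := rfl

lemma lam_eq (a b : B) : lam a b = star a b + b := by
  rw [star_eq, add_assoc, neg_add_cancel, add_zero]

lemma star_add_right (a y b : B) : star a (y + b) = star a y + y + star a b + -y := by
  simp only [star_eq, lam_add, neg_add_rev, neg_neg, add_assoc, neg_add_cancel_left,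
    add_neg_cancel_left]

lemma star_mul_left (x y z : B) : star (x * y) z = star x (star y z) + star y z + star x z := by
  simp only [star_eq, lam_add, lam_neg, lam_lam, neg_add_rev, neg_neg, add_assoc,
    neg_add_cancel_left, add_neg_cancel_left]

lemma lam_star (x a b : B) : lam x (star a b) = star (x * a) b + -(star x b) := by
  simp only [star_eq, lam_add, lam_neg, lam_lam, neg_add_rev, neg_neg, add_assoc,
    neg_add_cancel_left, add_neg_cancel_left]

lemma conj_star (y a b : B) : y + star a b + -y = -(star a y) + star a (y + b) := by
  simp only [star_eq, lam_add, neg_add_rev, neg_neg, add_assoc, neg_add_cancel_left,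
    add_neg_cancel_left]

lemma star_triv {A : Set B} (h : IsTrivialSubbrace A) {a b : B} (ha : a ∈ A) (hb : b ∈ A) :
    star a b = 0 := by
  rw [star, h.2 a ha b hb, ← add_assoc, neg_add_cancel, zero_add, add_neg_cancel]

lemma star_zero_right (a : B) : star a 0 = 0 := by
  simp [star, mul_zero']

lemma inv_eq_neg_lam (a : B) : a⁻¹ = -(lam a⁻¹ a) := by
  rw [lam, inv_mul_cancel, one_eq_zero, add_zero, neg_neg]

end SkewBrace

open SkewBrace in
/-- If `B = A₁ + A₂ = A₁A₂` with `A₁`, `A₂` trivial subbraces, then `A₁*A₂`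
and `A₂*A₁` are strong left ideals of `B` and `B*B = A₁*A₂ + A₂*A₁`. -/
theorem star_strongLeftIdeals {B : Type*} [SkewBrace B] (A₁ A₂ : Set B)
    (h₁ : IsTrivialSubbrace A₁) (h₂ : IsTrivialSubbrace A₂)
    (hsum : ∀ x : B, ∃ a ∈ A₁, ∃ b ∈ A₂, x = a + b)
    (hprod : ∀ x : B, ∃ a ∈ A₁, ∃ b ∈ A₂, x = a * b) :
    IsStrongLeftIdeal
      ((AddSubgroup.closure {x : B | ∃ a ∈ A₁, ∃ b ∈ A₂, x = star a b} : AddSubgroup B) : Set B) ∧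
    IsStrongLeftIdeal
      ((AddSubgroup.closure {x : B | ∃ a ∈ A₂, ∃ b ∈ A₁, x = star a b} : AddSubgroup B) : Set B) ∧
    ((AddSubgroup.closure {x : B | ∃ a b : B, x = star a b} : AddSubgroup B) : Set B) =
      {x : B | ∃ s ∈ AddSubgroup.closure {x : B | ∃ a ∈ A₁, ∃ b ∈ A₂, x = star a b},
        ∃ t ∈ AddSubgroup.closure {x : B | ∃ a ∈ A₂, ∃ b ∈ A₁, x = star a b}, x = s + t} := by
  set G₁ : Set B := {x : B | ∃ a ∈ A₁, ∃ b ∈ A₂, x = star a b} with hG₁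
  set G₂ : Set B := {x : B | ∃ a ∈ A₂, ∃ b ∈ A₁, x = star a b} with hG₂
  set S₁ := AddSubgroup.closure G₁ with hS₁
  set S₂ := AddSubgroup.closure G₂ with hS₂
  -- reversed decompositions
  have rsum : ∀ x : B, ∃ b ∈ A₂, ∃ a ∈ A₁, x = b + a := by
    intro x
    obtain ⟨a, ha, b, hb, h⟩ := hsum (-x)
    exact ⟨-b, h₂.1.1.2.2 b hb, -a, h₁.1.1.2.2 a ha, by
      rw [← neg_neg x, h, neg_add_rev]⟩
  have rprod : ∀ x : B, ∃ b ∈ A₂, ∃ a ∈ A₁, x = b * a := by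
    intro x
    obtain ⟨a, ha, b, hb, h⟩ := hprod x⁻¹
    exact ⟨b⁻¹, h₂.1.2.2.2 b hb, a⁻¹, h₁.1.2.2.2 a ha, by
      rw [← mul_inv_rev, ← h, inv_inv]⟩
  -- A₁ * B ⊆ G₁
  have hm1 : ∀ a ∈ A₁, ∀ y : B, star a y ∈ G₁ := by
    intro a ha y
    obtain ⟨d, hd, c, hc, hy⟩ := rsum y
    have : star a y = star a d := by
      rw [hy, star_add_right, star_triv h₁ ha hc, add_zero, add_assoc, add_neg_cancel, add_zero]
    exact ⟨a, ha, d, hd, this⟩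
  -- A₂ * B ⊆ G₂
  have hm2 : ∀ d ∈ A₂, ∀ y : B, star d y ∈ G₂ := by
    intro d hd y
    obtain ⟨c, hc, e, he, hy⟩ := hsum y
    have : star d y = star d c := by
      rw [hy, star_add_right, star_triv h₂ hd he, add_zero, add_assoc, add_neg_cancel, add_zero]
    exact ⟨d, hd, c, hc, this⟩
  -- B * A₂ ⊆ G₁
  have hm4 : ∀ x : B, ∀ b ∈ A₂, star x b ∈ G₁ := by
    intro x b hb
    obtain ⟨p, hp, q, hq, hx⟩ := hprod x
    have : star x b = star p b := by
      rw [hx, star_mul_left, star_triv h₂ hq hb, star_zero_right, zero_add, zero_add]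
    exact ⟨p, hp, b, hb, this⟩
  -- B * A₁ ⊆ G₂
  have hm5 : ∀ x : B, ∀ b ∈ A₁, star x b ∈ G₂ := by
    intro x b hb
    obtain ⟨q, hq, p, hp, hx⟩ := rprod x
    have : star x b = star q b := by
      rw [hx, star_mul_left, star_triv h₁ hp hb, star_zero_right, zero_add, zero_add]
    exact ⟨q, hq, b, hb, this⟩
  -- lambda invariance
  have hlam1 : ∀ x : B, ∀ s ∈ S₁, lam x s ∈ S₁ := by
    intro x s hs
    induction hs using AddSubgroup.closure_induction with
    | mem g hg =>
      obtain ⟨a, _, b, hb, rfl⟩ := hg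
      rw [lam_star]
      exact add_mem (AddSubgroup.subset_closure (hm4 (x*a) b hb))
        (neg_mem (AddSubgroup.subset_closure (hm4 x b hb)))
    | zero => rw [lam_zero]; exact zero_mem _
    | add u v _ _ hu hv => rw [lam_add]; exact add_mem hu hv
    | neg u _ hu => rw [lam_neg]; exact neg_mem hu
  have hlam2 : ∀ x : B, ∀ s ∈ S₂, lam x s ∈ S₂ := by
    intro x s hs
    induction hs using AddSubgroup.closure_induction with
    | mem g hg =>
      obtain ⟨a, _, b, hb, rfl⟩ := hg
      rw [lam_star]
      exact add_mem (AddSubgroup.subset_closure (hm5 (x*a) b hb))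
        (neg_mem (AddSubgroup.subset_closure (hm5 x b hb)))
    | zero => rw [lam_zero]; exact zero_mem _
    | add u v _ _ hu hv => rw [lam_add]; exact add_mem hu hv
    | neg u _ hu => rw [lam_neg]; exact neg_mem hu
  -- normality
  have conj_add : ∀ y u v : B, y + (u + v) + -y = (y + u + -y) + (y + v + -y) := by
    intro y u v
    simp only [add_assoc, neg_add_cancel_left]
  have conj_neg : ∀ y u : B, y + -u + -y = -(y + u + -y) := by
    intro y u
    simp only [neg_add_rev, neg_neg, add_assoc]
  have hconj1 : ∀ y : B, ∀ s ∈ S₁, y + s + -y ∈ S₁ := by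
    intro y s hs
    induction hs using AddSubgroup.closure_induction with
    | mem g hg =>
      obtain ⟨a, ha, b, _, rfl⟩ := hg
      rw [conj_star]
      exact add_mem (neg_mem (AddSubgroup.subset_closure (hm1 a ha y)))
        (AddSubgroup.subset_closure (hm1 a ha (y + b)))
    | zero => rw [add_zero, add_neg_cancel]; exact zero_mem _
    | add u v _ _ hu hv => rw [conj_add]; exact add_mem hu hv
    | neg u _ hu => rw [conj_neg]; exact neg_mem hu
  have hconj2 : ∀ y : B, ∀ s ∈ S₂, y + s + -y ∈ S₂ := by
    intro y s hs
    induction hs using AddSubgroup.closure_induction with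
    | mem g hg =>
      obtain ⟨a, ha, b, _, rfl⟩ := hg
      rw [conj_star]
      exact add_mem (neg_mem (AddSubgroup.subset_closure (hm2 a ha y)))
        (AddSubgroup.subset_closure (hm2 a ha (y + b)))
    | zero => rw [add_zero, add_neg_cancel]; exact zero_mem _
    | add u v _ _ hu hv => rw [conj_add]; exact add_mem hu hv
    | neg u _ hu => rw [conj_neg]; exact neg_mem hu
  -- strong left ideal structure from lambda invariance and normality
  have mkStrong : ∀ S : AddSubgroup B, (∀ x : B, ∀ s ∈ S, lam x s ∈ S) →
      (∀ y : B, ∀ s ∈ S, y + s + -y ∈ S) → IsStrongLeftIdeal (S : Set B) := by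
    intro S hlam hconj
    refine ⟨⟨⟨⟨zero_mem S, fun a ha b hb => add_mem ha hb, fun a ha => neg_mem ha⟩,
      ⟨by rw [one_eq_zero]; exact zero_mem S,
       fun a ha b hb => by rw [mul_eq_add_lam]; exact add_mem ha (hlam a b hb),
       fun a ha => by rw [inv_eq_neg_lam]; exact neg_mem (hlam a⁻¹ a ha)⟩⟩,
      fun x s hs => by rw [star_eq]; exact add_mem (hlam x s hs) (neg_mem hs)⟩,
      hconj⟩
  refine ⟨mkStrong S₁ hlam1 hconj1, mkStrong S₂ hlam2 hconj2, ?_⟩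
  -- the sum decomposition of B*B
  ext x
  simp only [SetLike.mem_coe, Set.mem_setOf_eq]
  constructor
  · intro hx
    induction hx using AddSubgroup.closure_induction with
    | mem g hg =>
      obtain ⟨u, y, rfl⟩ := hg
      obtain ⟨q, hq, p, hp, rfl⟩ := rprod u
      rw [star_mul_left]
      set t₁ := star q (star p y) with ht₁
      set s := star p y with hsdef
      set t₂ := star q y with ht₂
      have hsm : s ∈ S₁ := AddSubgroup.subset_closure (hm1 p hp y)
      have ht₁m : t₁ ∈ S₂ := AddSubgroup.subset_closure (hm2 q hq s)
      have ht₂m : t₂ ∈ S₂ := AddSubgroup.subset_closure (hm2 q hq y)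
      refine ⟨t₁ + s + -t₁, hconj1 t₁ s hsm, t₁ + t₂, add_mem ht₁m ht₂m, ?_⟩
      simp only [add_assoc, neg_add_cancel_left]
    | zero => exact ⟨0, zero_mem _, 0, zero_mem _, by rw [add_zero]⟩
    | add u v _ _ hu hv =>
      obtain ⟨s, hsm, t, htm, rfl⟩ := hu
      obtain ⟨s', hsm', t', htm', rfl⟩ := hv
      refine ⟨s + (t + s' + -t), add_mem hsm (hconj1 t s' hsm'), t + t',
        add_mem htm htm', ?_⟩
      simp only [add_assoc, neg_add_cancel_left]
    | neg u _ hu =>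
      obtain ⟨s, hsm, t, htm, rfl⟩ := hu
      refine ⟨-t + -s + - -t, hconj1 (-t) (-s) (neg_mem hsm), -t, neg_mem htm, ?_⟩
      simp only [neg_add_rev, neg_neg, add_assoc, add_neg_cancel, add_zero]
  · rintro ⟨s, hs, t, ht, rfl⟩
    have hsub1 : S₁ ≤ AddSubgroup.closure {x : B | ∃ a b : B, x = star a b} :=
      AddSubgroup.closure_le _ |>.mpr (fun g hg => by
        obtain ⟨a, _, b, _, rfl⟩ := hg
        exact AddSubgroup.subset_closure ⟨a, b, rfl⟩)
    have hsub2 : S₂ ≤ AddSubgroup.closure {x : B | ∃ a b : B, x = star a b} :=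
      AddSubgroup.closure_le _ |>.mpr (fun g hg => by
        obtain ⟨a, _, b, _, rfl⟩ := hg
        exact AddSubgroup.subset_closure ⟨a, b, rfl⟩)
    exact add_mem (hsub1 hs) (hsub2 ht)
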